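/- Let U be a WSTS over a finite alphabet Σ whose state order (S, ≤) is an ω²-WQO, i.e., the set of downward-closed subsets of S ordered by inclusion is a WQO. Then there exists a deterministic WSTS V over Σ with L(V) = L(U). -/

import Mathlib

/-- A labeled transition system whose states carry a compatible quasi order
(an upward-compatible LTS, ULTS): the final states are upward closed and the
quasi order is a simulation relation. -/
structure ULTS (A : Type) : Type 1 where
  S : Type
  le : S → S → Prop
  le_refl : ∀ s, le s s
  le_trans : ∀ ⦃s t u⦄, le s t → le t u → le s u
  init : Set S
  tr : S → A → Set S
  final : Set S
  final_up : ∀ ⦃s t⦄, s ∈ final → le s t → t ∈ final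
  sim : ∀ ⦃s t⦄ (a : A) ⦃s'⦄, le s t → s' ∈ tr s a → ∃ t', t' ∈ tr t a ∧ le s' t'

namespace ULTS

variable {A : Type}

/-- One-step successors of a set of states. -/
def stepSet (U : ULTS A) (P : Set U.S) (a : A) : Set U.S := ⋃ s ∈ P, U.tr s a

/-- States reachable from `P` by reading a word. -/
def reachSet (U : ULTS A) (P : Set U.S) : List A → Set U.S
  | [] => P
  | a :: w => U.reachSet (U.stepSet P a) w

/-- The language of a ULTS: words that can reach a final state from an initial state. -/
def lang (U : ULTS A) : Set (List A) := {w | (U.reachSet U.init w ∩ U.final).Nonempty}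

/-- The quasi order of the ULTS is a well quasi order; a ULTS with this property
is a (upward-compatible) WSTS. -/
def IsWQO (U : ULTS A) : Prop := ∀ f : ℕ → U.S, ∃ i j, i < j ∧ U.le (f i) (f j)

/-- A ULTS is deterministic if the set of initial states and every transition image
are singletons. -/
def Deterministic (U : ULTS A) : Prop :=
  (∃ s, U.init = {s}) ∧ ∀ s a, ∃ t, U.tr s a = {t}

end ULTS

/-- A language is regular if it is accepted by a deterministic finite automaton
with finitely many states. -/
def IsRegularLang {A : Type} (L : Set (List A)) : Prop :=
  ∃ (Q : Type) (_ : Fintype Q) (M : DFA A Q), M.accepts = L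

/-- Two languages are regularly separable if some regular language contains the
first and is disjoint from the second. -/
def RegSep {A : Type} (L1 L2 : Set (List A)) : Prop :=
  ∃ R : Set (List A), IsRegularLang R ∧ L1 ⊆ R ∧ R ∩ L2 = ∅


/-- A set of states is downward closed. -/
def ULTS.DownClosed {A : Type} (U : ULTS A) (X : Set U.S) : Prop :=
  ∀ ⦃s t⦄, U.le s t → t ∈ X → s ∈ X

/-- The state order is an ω²-WQO: the downward-closed subsets of the states,
ordered by inclusion, form a WQO. -/
def ULTS.IsOmegaSqWQO {A : Type} (U : ULTS A) : Prop :=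
  ∀ D : ℕ → {X : Set U.S // U.DownClosed X}, ∃ i j, i < j ∧ (D i).1 ⊆ (D j).1

/-!
Run the subset construction on downward-closed sets of states, ordered by inclusion; the
ω²-WQO hypothesis says exactly that this order is a WQO. Because `≤` is a simulation, taking
downward closures commutes with reading letters, so the state reached on `w` is the downward
closure of the set of states `U` reaches on `w`; as the final states are upward closed, that
closure meets them iff the reached set does.
-/

namespace ULTS

variable {A : Type} (U : ULTS A)

lemma stepSet_singleton (s : U.S) (a : A) : U.stepSet {s} a = U.tr s a := by
  simp [stepSet]

lemma stepSet_mono {P Q : Set U.S} (h : P ⊆ Q) (a : A) : U.stepSet P a ⊆ U.stepSet Q a :=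
  Set.biUnion_subset_biUnion_left h

def downClosure (P : Set U.S) : Set U.S := {s | ∃ t ∈ P, U.le s t}

lemma subset_downClosure (P : Set U.S) : P ⊆ U.downClosure P :=
  fun s hs => ⟨s, hs, U.le_refl s⟩

lemma downClosure_mono {P Q : Set U.S} (h : P ⊆ Q) : U.downClosure P ⊆ U.downClosure Q := by
  rintro s ⟨t, ht, hst⟩
  exact ⟨t, h ht, hst⟩

lemma downClosed_downClosure (P : Set U.S) : U.DownClosed (U.downClosure P) := by
  rintro s t hst ⟨u, hu, htu⟩
  exact ⟨u, hu, U.le_trans hst htu⟩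

lemma downClosure_stepSet_downClosure (P : Set U.S) (a : A) :
    U.downClosure (U.stepSet (U.downClosure P) a) = U.downClosure (U.stepSet P a) := by
  refine Set.Subset.antisymm ?_ (U.downClosure_mono (U.stepSet_mono (U.subset_downClosure P) a))
  rintro s ⟨s', hs', hss'⟩
  simp only [stepSet, Set.mem_iUnion] at hs'
  obtain ⟨t, ⟨u, hu, htu⟩, hs'⟩ := hs'
  obtain ⟨u', hu', hs'u'⟩ := U.sim a htu hs'
  exact ⟨u', Set.mem_biUnion hu hu', U.le_trans hss' hs'u'⟩

lemma downClosure_inter_final_nonempty (P : Set U.S) :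
    (U.downClosure P ∩ U.final).Nonempty ↔ (P ∩ U.final).Nonempty := by
  constructor
  · rintro ⟨s, ⟨t, ht, hst⟩, hs⟩
    exact ⟨t, ht, U.final_up hs hst⟩
  · rintro ⟨s, hs, hsf⟩
    exact ⟨s, U.subset_downClosure P hs, hsf⟩

def determinization : ULTS A where
  S := {X : Set U.S // U.DownClosed X}
  le X Y := X.1 ⊆ Y.1
  le_refl _ := Set.Subset.refl _
  le_trans _ _ _ := Set.Subset.trans
  init := {⟨U.downClosure U.init, U.downClosed_downClosure _⟩}
  tr X a := {⟨U.downClosure (U.stepSet X.1 a), U.downClosed_downClosure _⟩}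
  final := {X | (X.1 ∩ U.final).Nonempty}
  final_up := fun _ _ ⟨s, hs, hsf⟩ hXY => ⟨s, hXY hs, hsf⟩
  sim := by
    rintro X Y a _ hXY rfl
    exact ⟨_, rfl, U.downClosure_mono (U.stepSet_mono hXY a)⟩

def toDownset (P : Set U.S) : U.determinization.S :=
  ⟨U.downClosure P, U.downClosed_downClosure P⟩

lemma determinization_isWQO (h : U.IsOmegaSqWQO) : U.determinization.IsWQO := h

lemma determinization_deterministic : U.determinization.Deterministic :=
  ⟨⟨_, rfl⟩, fun _ _ => ⟨_, rfl⟩⟩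

lemma determinization_reachSet (P : Set U.S) (w : List A) :
    U.determinization.reachSet {U.toDownset P} w = {U.toDownset (U.reachSet P w)} := by
  induction w generalizing P with
  | nil => rfl
  | cons a w ih =>
    have hstep : U.toDownset (U.stepSet (U.downClosure P) a) = U.toDownset (U.stepSet P a) :=
      Subtype.ext (U.downClosure_stepSet_downClosure P a)
    simp only [reachSet]
    rw [stepSet_singleton]
    exact (congrArg (fun X => U.determinization.reachSet {X} w) hstep).trans (ih _)

lemma lang_determinization : U.determinization.lang = U.lang := by
  ext w
  change (U.determinization.reachSet {U.toDownset U.init} w ∩ _).Nonempty ↔ _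
  rw [determinization_reachSet, Set.singleton_inter_nonempty]
  exact U.downClosure_inter_final_nonempty _

end ULTS

theorem omegaSq_wsts_determinizable_general {A : Type}
    (U : ULTS A) (homega : U.IsOmegaSqWQO) :
    ∃ V : ULTS A, V.IsWQO ∧ V.Deterministic ∧ V.lang = U.lang :=
  ⟨U.determinization, U.determinization_isWQO homega, U.determinization_deterministic,
    U.lang_determinization⟩

/-- Every WSTS over an ω²-WQO can be determinized: its language
is accepted by a deterministic WSTS. -/
theorem omegaSq_wsts_determinizable {A : Type} [Finite A]
    (U : ULTS A) (hwqo : U.IsWQO) (homega : U.IsOmegaSqWQO) :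
    ∃ V : ULTS A, V.IsWQO ∧ V.Deterministic ∧ V.lang = U.lang :=
  omegaSq_wsts_determinizable_general U homega
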